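/- arXiv:1512.09278 — 8 statements merged into one kernel-verified Lean document; each statement's English description precedes it below -/
import Mathlib

section
/- For all nonnegative integers A, B and every complex number u ≠ 1, the contour integral f_{A,B}(u) satisfies the symmetry relation f_{A,B}(u) = f_{B,A}(u) + (A − B). -/
/-- `f A B u` is the contour integral
`(1/(2πi)) ∮_{|z|=r} (1 + 1/(u+z−1))^A (1 − 1/z)^B dz`
over a circle of radius `0 < r < |1−u|` centered at `0` (here `r = |1−u|/2`);
the value is independent of the choice of such `r`. -/
noncomputable def f (A B : ℕ) (u : ℂ) : ℂ :=
  (2 * Real.pi * Complex.I)⁻¹ *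
    (∮ z in C(0, ‖1 - u‖ / 2), (1 + (u + z - 1)⁻¹) ^ A * (1 - z⁻¹) ^ B)

/-!
Write `x = (z - a)⁻¹` and `y = z⁻¹` with `a = 1 - u`, so that the integrand is
`(1 + x) ^ A * (1 - y) ^ B`. After binomial expansion everything reduces to the integrals
`G k j = ∮ x ^ k * y ^ j` (`monomialIntegral`) over a circle enclosing the pole `0` but not `a`.
Cauchy's theorem gives `G k 0 = 0`, and `G 0 j = 2πi` exactly when `j = 1`. The partial fraction
identity `a * x * y = x - y` lowers the total degree, and the antisymmetrised combination
`G k j - (-1) ^ (k + j) * G j k` (the substitution `z ↦ a - z` exchanges `x` and `-y`) obeys the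
same recursion, so it equals `2πi` when `k + j = 1` and vanishes otherwise. Hence
`f A B - f B A` only sees the linear terms `A * x - B * y`, giving `A - B`.
-/

open Complex Metric Finset
open scoped Real

theorem sum_range_choose_mul_choose_mul_ite_add_eq_one {R : Type*} [CommRing R] (A B : ℕ)
    (c : R) :
    ∑ k ∈ range (A + 1), ∑ j ∈ range (B + 1),
      (A.choose k * B.choose j * (-1) ^ j : R) * (if k + j = 1 then c else 0) = (A - B) * c := by
  rcases A with _ | A <;> rcases B with _ | B <;>
    simp [sum_range_succ', Nat.add_eq_one_iff] <;> ring

theorem one_add_pow_mul_one_sub_pow {R : Type*} [CommRing R] (A B : ℕ) (x y : R) :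
    (1 + x) ^ A * (1 - y) ^ B =
      ∑ k ∈ range (A + 1), ∑ j ∈ range (B + 1),
        (A.choose k * B.choose j * (-1) ^ j : R) * (x ^ k * y ^ j) := by
  rw [add_comm 1 x, add_pow, sub_eq_add_neg, add_comm 1 (-y), add_pow, sum_mul_sum]
  refine sum_congr rfl fun k _ => sum_congr rfl fun j _ => ?_
  rw [neg_pow]
  ring

section CircleIntegrals

variable {a : ℂ} {R : ℝ}

noncomputable def monomialIntegral (a : ℂ) (R : ℝ) (k j : ℕ) : ℂ :=
  ∮ z in C(0, R), (z - a)⁻¹ ^ k * z⁻¹ ^ j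

theorem circleIntegrable_inv_sub_pow_mul_inv_pow (hR : 0 < R) (ha : ‖a‖ ≠ R) (k j : ℕ) :
    CircleIntegrable (fun z => (z - a)⁻¹ ^ k * z⁻¹ ^ j) 0 R := by
  refine ContinuousOn.circleIntegrable hR.le (.mul ?_ ?_)
  · refine ((continuousOn_id.sub continuousOn_const).inv₀ fun z hz => ?_).pow k
    rintro h
    rw [Pi.sub_apply, id, sub_eq_zero] at h
    rw [h, mem_sphere_zero_iff_norm] at hz
    exact ha hz
  · exact (continuousOn_id.inv₀ fun z hz => ne_zero_of_mem_sphere hR.ne' ⟨z, hz⟩).pow j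

theorem monomialIntegral_zero_right (hR : 0 ≤ R) (ha : R < ‖a‖) (k : ℕ) :
    monomialIntegral a R k 0 = 0 := by
  have hdiff : DifferentiableOn ℂ (fun z : ℂ => (z - a)⁻¹ ^ k) (closedBall 0 R) := by
    refine ((differentiableOn_id.sub_const a).inv fun z hz h => ?_).pow k
    rw [id, sub_eq_zero] at h
    rw [h, mem_closedBall_zero_iff] at hz
    exact ha.not_ge hz
  simpa [monomialIntegral] using (hdiff.diffContOnCl_ball subset_rfl).circleIntegral_eq_zero hR

theorem monomialIntegral_zero_left (hR : 0 < R) (j : ℕ) :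
    monomialIntegral a R 0 j = if j = 1 then 2 * π * I else 0 := by
  split_ifs with hj
  · subst hj
    simpa [monomialIntegral] using
      circleIntegral.integral_sub_inv_of_mem_ball (mem_ball_self hR : (0 : ℂ) ∈ ball 0 R)
  · have hj' : -(j : ℤ) ≠ -1 := by omega
    simpa [monomialIntegral] using circleIntegral.integral_sub_zpow_of_ne hj' 0 0 R

theorem mul_monomialIntegral_succ_succ (hR : 0 < R) (ha : ‖a‖ ≠ R) (k j : ℕ) :
    a * monomialIntegral a R (k + 1) (j + 1) =
      monomialIntegral a R (k + 1) j - monomialIntegral a R k (j + 1) := by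
  have hpf : Set.EqOn (fun z : ℂ => a * ((z - a)⁻¹ ^ (k + 1) * z⁻¹ ^ (j + 1)))
      (fun z => (z - a)⁻¹ ^ (k + 1) * z⁻¹ ^ j - (z - a)⁻¹ ^ k * z⁻¹ ^ (j + 1))
      (sphere 0 R) := by
    intro z hz
    have hz0 : z ≠ 0 := ne_zero_of_mem_sphere hR.ne' ⟨z, hz⟩
    have hza : z - a ≠ 0 := fun h =>
      ha (by rwa [← sub_eq_zero.1 h, ← mem_sphere_zero_iff_norm])
    have hxy : a * ((z - a)⁻¹ * z⁻¹) = (z - a)⁻¹ - z⁻¹ := by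
      field_simp
      ring
    simp only
    linear_combination (z - a)⁻¹ ^ k * z⁻¹ ^ j * hxy
  rw [monomialIntegral, ← circleIntegral.integral_const_mul,
    circleIntegral.integral_congr hR.le hpf,
    circleIntegral.integral_sub (circleIntegrable_inv_sub_pow_mul_inv_pow hR ha _ _)
      (circleIntegrable_inv_sub_pow_mul_inv_pow hR ha _ _)]
  rfl

theorem monomialIntegral_sub_swap (hR : 0 < R) (ha : R < ‖a‖) (k j : ℕ) :
    monomialIntegral a R k j - (-1) ^ (k + j) * monomialIntegral a R j k =
      if k + j = 1 then 2 * π * I else 0 := by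
  have ha0 : a ≠ 0 := norm_pos_iff.1 (hR.trans ha)
  induction k generalizing j with
  | zero => simp [monomialIntegral_zero_left hR, monomialIntegral_zero_right hR.le ha]
  | succ k ihk =>
    induction j with
    | zero =>
      simp only [monomialIntegral_zero_left hR, monomialIntegral_zero_right hR.le ha]
      split_ifs with hk <;> simp_all
    | succ j ihj =>
      rw [if_neg (by omega)]
      refine (mul_right_inj' ha0).1 ?_
      have h1 := mul_monomialIntegral_succ_succ hR ha.ne' k j
      have h2 := mul_monomialIntegral_succ_succ hR ha.ne' j k
      have h3 := ihk (j + 1)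
      rw [show k + (j + 1) = k + 1 + j by omega] at h3
      linear_combination h1 - (-1) ^ (k + j) * h2 + ihj - h3

noncomputable def binomialIntegral (a : ℂ) (R : ℝ) (A B : ℕ) : ℂ :=
  ∮ z in C(0, R), (1 + (z - a)⁻¹) ^ A * (1 - z⁻¹) ^ B

theorem binomialIntegral_eq_sum (hR : 0 < R) (ha : ‖a‖ ≠ R) (A B : ℕ) :
    binomialIntegral a R A B =
      ∑ k ∈ range (A + 1), ∑ j ∈ range (B + 1),
        (A.choose k * B.choose j * (-1) ^ j : ℂ) * monomialIntegral a R k j := by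
  have hint (c : ℂ) (k j : ℕ) :
      CircleIntegrable (fun z => c * ((z - a)⁻¹ ^ k * z⁻¹ ^ j)) 0 R :=
    (circleIntegrable_inv_sub_pow_mul_inv_pow hR ha k j).const_smul
  simp only [binomialIntegral, one_add_pow_mul_one_sub_pow]
  rw [circleIntegral.integral_fun_sum fun k _ =>
    CircleIntegrable.fun_sum _ fun j _ => hint _ k j]
  refine sum_congr rfl fun k _ => ?_
  rw [circleIntegral.integral_fun_sum fun j _ => hint _ k j]
  exact sum_congr rfl fun j _ => circleIntegral.integral_const_mul _ _ _ _

theorem binomialIntegral_sub_swap (hR : 0 < R) (ha : R < ‖a‖) (A B : ℕ) :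
    binomialIntegral a R A B - binomialIntegral a R B A = 2 * π * I * (A - B) := by
  rw [binomialIntegral_eq_sum hR ha.ne', binomialIntegral_eq_sum hR ha.ne',
    sum_comm (s := range (B + 1)), ← sum_sub_distrib]
  calc _ = ∑ k ∈ range (A + 1), ∑ j ∈ range (B + 1),
          (A.choose k * B.choose j * (-1) ^ j : ℂ) *
            (monomialIntegral a R k j - (-1) ^ (k + j) * monomialIntegral a R j k) := by
        refine sum_congr rfl fun k _ => ?_
        rw [← sum_sub_distrib]
        refine sum_congr rfl fun j _ => ?_
        have hsign : (-1 : ℂ) ^ j * (-1) ^ (k + j) = (-1) ^ k := by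
          rw [pow_add, mul_left_comm, ← pow_add, Even.neg_one_pow ⟨j, rfl⟩, mul_one]
        linear_combination (A.choose k * B.choose j * monomialIntegral a R j k : ℂ) * hsign
    _ = 2 * π * I * (A - B) := by
        simp only [monomialIntegral_sub_swap hR ha]
        rw [sum_range_choose_mul_choose_mul_ite_add_eq_one, mul_comm]

end CircleIntegrals

/-- Symmetry relation: `f_{A,B}(u) = f_{B,A}(u) + (A − B)`. -/
theorem stmt0 (A B : ℕ) (u : ℂ) (hu : u ≠ 1) :
    f A B u = f B A u + ((A : ℂ) - (B : ℂ)) := by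
  have ha : 0 < ‖1 - u‖ := norm_pos_iff.2 (sub_ne_zero.2 hu.symm)
  have hf (A B : ℕ) :
      f A B u = (2 * π * I)⁻¹ * binomialIntegral (1 - u) (‖1 - u‖ / 2) A B := by
    simp only [f, binomialIntegral, sub_sub_eq_add_sub, add_comm u]
  have key := binomialIntegral_sub_swap (half_pos ha) (half_lt_self ha) A B
  rw [hf, hf, ← sub_eq_iff_eq_add', ← mul_sub, key, ← mul_assoc,
    inv_mul_cancel₀ (by simp [Real.pi_ne_zero]), one_mul]
end

section
/- For all integers A ≥ 1, B ≥ 1 and every complex u ≠ 1, the function u ↦ f_{A,B}(u) is differentiable at u and its derivative equals both −A·(f_{A−1,B}(u) − 2 f_{A,B}(u) + f_{A+1,B}(u)) and −B·(f_{A,B−1}(u) − 2 f_{A,B}(u) + f_{A,B+1}(u)). -/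
open Complex Metric Set Filter Function Topology

/-- At `n = 0` the truncated `n - 1` makes this `p 1 - p 0`; it only ever appears multiplied
by `n`. -/
def secondDiff {M : Type*} [AddCommGroup M] (p : ℕ → M) (n : ℕ) : M :=
  p (n - 1) - 2 • p n + p (n + 1)

theorem secondDiff_const_mul {R : Type*} [Ring R] (a : R) (p : ℕ → R) (n : ℕ) :
    secondDiff (fun k => a * p k) n = a * secondDiff p n := by
  simp only [secondDiff, mul_add, mul_sub, mul_smul_comm]

theorem natCast_mul_pow_pred_mul_sub_one_sq {R : Type*} [CommRing R] (x : R) (n : ℕ) :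
    (n : R) * (x ^ (n - 1) * (x - 1) ^ 2) = n * secondDiff (x ^ ·) n := by
  cases n with
  | zero => simp
  | succ n => simp only [secondDiff, Nat.add_sub_cancel]; ring

section Derivatives

variable {𝕜 : Type*} [NontriviallyNormedField 𝕜]

theorem hasDerivAt_one_add_inv_pow (n : ℕ) {w : 𝕜} (hw : w ≠ 0) :
    HasDerivAt (fun w => (1 + w⁻¹) ^ n) (-(n : 𝕜) * secondDiff (fun k => (1 + w⁻¹) ^ k) n) w := by
  refine (((hasDerivAt_inv hw).const_add 1).pow n).congr_deriv ?_
  rw [neg_mul, ← natCast_mul_pow_pred_mul_sub_one_sq, add_sub_cancel_left, inv_pow]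
  ring

theorem hasDerivAt_one_sub_inv_pow (n : ℕ) {z : 𝕜} (hz : z ≠ 0) :
    HasDerivAt (fun z => (1 - z⁻¹) ^ n) ((n : 𝕜) * secondDiff (fun k => (1 - z⁻¹) ^ k) n) z := by
  refine (((hasDerivAt_inv hz).const_sub 1).pow n).congr_deriv ?_
  rw [← natCast_mul_pow_pred_mul_sub_one_sq, sub_sub_cancel_left, neg_sq, inv_pow]
  ring

end Derivatives

section CircleIntegral

variable {E : Type*} [NormedAddCommGroup E] {c : ℂ} {R : ℝ}

theorem circleIntegrable_secondDiff {g : ℕ → ℂ → E} (hg : ∀ k, CircleIntegrable (g k) c R)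
    (n : ℕ) : CircleIntegrable (fun z => secondDiff (g · z) n) c R := by
  simp only [secondDiff, two_smul]
  exact ((hg _).sub ((hg _).add (hg _))).add (hg _)

variable [NormedSpace ℂ E]

theorem circleIntegral_secondDiff {g : ℕ → ℂ → E} (hg : ∀ k, CircleIntegrable (g k) c R) (n : ℕ) :
    (∮ z in C(c, R), secondDiff (g · z) n) = secondDiff (fun k => ∮ z in C(c, R), g k z) n := by
  simp only [secondDiff, two_smul]
  rw [circleIntegral.integral_add (f := fun z => g (n - 1) z - (g n z + g n z))
      ((hg _).sub ((hg _).add (hg _))) (hg _),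
    circleIntegral.integral_sub (g := fun z => g n z + g n z) (hg _) ((hg _).add (hg _)),
    circleIntegral.integral_add (hg _) (hg _)]

theorem hasDerivAt_circleIntegral_of_continuousOn {F F' : ℂ → ℂ → E} {u : ℂ} {ε : ℝ}
    (hR : 0 ≤ R) (hε : 0 < ε) (hF : ∀ v ∈ ball u ε, CircleIntegrable (F v) c R)
    (hF' : ContinuousOn (uncurry F') (closedBall u ε ×ˢ sphere c R))
    (hderiv : ∀ v ∈ ball u ε, ∀ z ∈ sphere c R, HasDerivAt (F · z) (F' v z) v) :
    HasDerivAt (fun v => ∮ z in C(c, R), F v z) (∮ z in C(c, R), F' u z) u := by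
  obtain ⟨C, hC⟩ :=
    ((isCompact_closedBall u ε).prod (isCompact_sphere c R)).exists_bound_of_continuousOn hF'
  have hF'u : CircleIntegrable (F' u) c R :=
    (hF'.comp (continuous_const.prodMk continuous_id).continuousOn
      fun z hz => ⟨mem_closedBall_self hε.le, hz⟩).circleIntegrable hR
  have hball := ball_mem_nhds u hε
  refine (intervalIntegral.hasDerivAt_integral_of_dominated_loc_of_deriv_le
    (F := fun v θ => deriv (circleMap c R) θ • F v (circleMap c R θ))
    (F' := fun v θ => deriv (circleMap c R) θ • F' v (circleMap c R θ))
    (bound := fun _ => R * C) hball ?_ (hF u (mem_ball_self hε)).out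
      (intervalIntegrable_iff.1 hF'u.out).aestronglyMeasurable ?_ intervalIntegrable_const ?_).2
  · filter_upwards [hball] with v hv
    exact (intervalIntegrable_iff.1 (hF v hv).out).aestronglyMeasurable
  · refine .of_forall fun θ _ v hv => ?_
    rw [norm_smul, deriv_circleMap, norm_mul, norm_circleMap_zero, norm_I, mul_one,
      abs_of_nonneg hR]
    exact mul_le_mul_of_nonneg_left
      (hC (v, circleMap c R θ) ⟨ball_subset_closedBall hv, circleMap_mem_sphere c hR θ⟩) hR
  · exact .of_forall fun θ _ v hv =>
      (hderiv v hv _ (circleMap_mem_sphere c hR θ)).const_smul _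

end CircleIntegral

noncomputable def integrand (A B : ℕ) (u z : ℂ) : ℂ := (1 + (u + z - 1)⁻¹) ^ A * (1 - z⁻¹) ^ B

theorem ne_zero_and_add_sub_one_ne_zero {u z : ℂ} (hz : 0 < ‖z‖) (hzu : ‖z‖ < ‖1 - u‖) :
    z ≠ 0 ∧ u + z - 1 ≠ 0 := by
  refine ⟨norm_pos_iff.1 hz, fun h => hzu.ne ?_⟩
  rw [show z = 1 - u by linear_combination h]

theorem hasDerivAt_integrand_left (A B : ℕ) {u z : ℂ} (h : u + z - 1 ≠ 0) :
    HasDerivAt (integrand A B · z) (-(A : ℂ) * secondDiff (integrand · B u z) A) u := by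
  have hw : HasDerivAt (fun v : ℂ => v + z - 1) 1 u := ((hasDerivAt_id u).add_const z).sub_const 1
  refine (((hasDerivAt_one_add_inv_pow A h).comp u hw).mul_const ((1 - z⁻¹) ^ B)).congr_deriv ?_
  simp only [integrand, secondDiff, two_smul, mul_one]
  ring

theorem hasDerivAt_integrand_right (A B : ℕ) {u z : ℂ} (hz : z ≠ 0) (h : u + z - 1 ≠ 0) :
    HasDerivAt (integrand A B u)
      (-(A : ℂ) * secondDiff (integrand · B u z) A + B * secondDiff (integrand A · u z) B) z := by
  have hw : HasDerivAt (fun z : ℂ => u + z - 1) 1 z := ((hasDerivAt_id z).const_add u).sub_const 1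
  refine (((hasDerivAt_one_add_inv_pow A h).comp z hw).mul
    (hasDerivAt_one_sub_inv_pow B hz)).congr_deriv ?_
  simp only [integrand, secondDiff, two_smul, comp_apply, mul_one]
  ring

theorem continuousOn_integrand (A B : ℕ) {S : Set (ℂ × ℂ)}
    (hS : ∀ p ∈ S, p.2 ≠ 0 ∧ p.1 + p.2 - 1 ≠ 0) :
    ContinuousOn (fun p : ℂ × ℂ => integrand A B p.1 p.2) S := fun p hp => by
  obtain ⟨hz, hu⟩ := hS p hp
  unfold integrand
  fun_prop (disch := assumption)

section Circle

variable {u : ℂ} {r : ℝ}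

theorem circleIntegrable_integrand (hr : 0 < r) (hru : r < ‖1 - u‖) (A B : ℕ) :
    CircleIntegrable (integrand A B u) 0 r := by
  refine ContinuousOn.circleIntegrable hr.le fun z hz => ?_
  rw [mem_sphere_zero_iff_norm] at hz
  obtain ⟨hz0, hzu⟩ := ne_zero_and_add_sub_one_ne_zero (hz ▸ hr) (hz ▸ hru)
  exact (hasDerivAt_integrand_right A B hz0 hzu).continuousAt.continuousWithinAt

theorem circleIntegral_integrand_eq_of_le {R : ℝ} (hr : 0 < r) (hrR : r ≤ R) (hRu : R < ‖1 - u‖)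
    (A B : ℕ) : (∮ z in C(0, R), integrand A B u z) = ∮ z in C(0, r), integrand A B u z := by
  have hann : ∀ z ∈ closedBall (0 : ℂ) R \ ball 0 r, z ≠ 0 ∧ u + z - 1 ≠ 0 :=
    fun z ⟨hzR, hzr⟩ => by
      rw [mem_closedBall_zero_iff] at hzR
      rw [mem_ball_zero_iff, not_lt] at hzr
      exact ne_zero_and_add_sub_one_ne_zero (hr.trans_le hzr) (hzR.trans_lt hRu)
  refine circleIntegral_eq_of_differentiable_on_annulus_off_countable hr hrR countable_empty
    (fun z hz => ?_) fun z hz => ?_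
  · obtain ⟨hz0, hzu⟩ := hann z hz
    exact (hasDerivAt_integrand_right A B hz0 hzu).continuousAt.continuousWithinAt
  · obtain ⟨hz0, hzu⟩ :=
      hann z ⟨ball_subset_closedBall hz.1.1, fun h => hz.1.2 (ball_subset_closedBall h)⟩
    exact (hasDerivAt_integrand_right A B hz0 hzu).differentiableAt

theorem f_eq_circleIntegral (hr : 0 < r) (hru : r < ‖1 - u‖) (A B : ℕ) :
    f A B u = (2 * Real.pi * I)⁻¹ * ∮ z in C(0, r), integrand A B u z := by
  have hd : 0 < ‖1 - u‖ := hr.trans hru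
  change (2 * Real.pi * I)⁻¹ * (∮ z in C(0, ‖1 - u‖ / 2), integrand A B u z) = _
  rcases le_total r (‖1 - u‖ / 2) with h | h
  · rw [circleIntegral_integrand_eq_of_le hr h (by linarith)]
  · rw [← circleIntegral_integrand_eq_of_le (by linarith) h hru]

theorem natCast_mul_secondDiff_circleIntegral_integrand (hr : 0 < r) (hru : r < ‖1 - u‖)
    (A B : ℕ) :
    (A : ℂ) * secondDiff (fun a => ∮ z in C(0, r), integrand a B u z) A =
      B * secondDiff (fun b => ∮ z in C(0, r), integrand A b u z) B := by
  have hint := circleIntegrable_integrand hr hru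
  have hzero : (∮ z in C(0, r),
      (-(A : ℂ) * secondDiff (integrand · B u z) A + B * secondDiff (integrand A · u z) B)) =
        0 := by
    refine circleIntegral.integral_eq_zero_of_hasDerivWithinAt (f := integrand A B u) hr.le
      fun z hz => ?_
    rw [mem_sphere_zero_iff_norm] at hz
    obtain ⟨hz0, hzu⟩ := ne_zero_and_add_sub_one_ne_zero (hz ▸ hr) (hz ▸ hru)
    exact (hasDerivAt_integrand_right A B hz0 hzu).hasDerivWithinAt
  have hsdA : CircleIntegrable (fun z => -(A : ℂ) * secondDiff (integrand · B u z) A) 0 r :=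
    (circleIntegrable_secondDiff (fun a => hint a B) A).const_smul
  have hsdB : CircleIntegrable (fun z => (B : ℂ) * secondDiff (integrand A · u z) B) 0 r :=
    (circleIntegrable_secondDiff (hint A) B).const_smul
  rw [circleIntegral.integral_add hsdA hsdB,
    circleIntegral.integral_const_mul, circleIntegral.integral_const_mul,
    circleIntegral_secondDiff (fun a => hint a B), circleIntegral_secondDiff (hint A)] at hzero
  linear_combination -hzero

end Circle

theorem half_norm_one_sub_lt_of_mem_closedBall {u v : ℂ} (hu : u ≠ 1)
    (hv : v ∈ closedBall u (‖1 - u‖ / 4)) : ‖1 - u‖ / 2 < ‖1 - v‖ := by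
  have hd : 0 < ‖1 - u‖ := norm_pos_iff.2 (sub_ne_zero.2 hu.symm)
  have := norm_sub_le_norm_sub_add_norm_sub 1 v u
  rw [mem_closedBall, dist_eq_norm] at hv
  linarith

theorem hasDerivAt_circleIntegral_integrand (A B : ℕ) {u : ℂ} (hu : u ≠ 1) :
    HasDerivAt (fun v => ∮ z in C(0, ‖1 - u‖ / 2), integrand A B v z)
      (-(A : ℂ) * secondDiff (fun a => ∮ z in C(0, ‖1 - u‖ / 2), integrand a B u z) A) u := by
  set d := ‖1 - u‖
  have hd : 0 < d := norm_pos_iff.2 (sub_ne_zero.2 hu.symm)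
  have hnear := fun v => half_norm_one_sub_lt_of_mem_closedBall (v := v) hu
  have hsing : ∀ p ∈ closedBall u (d / 4) ×ˢ sphere (0 : ℂ) (d / 2),
      p.2 ≠ 0 ∧ p.1 + p.2 - 1 ≠ 0 := fun p ⟨hv, hz⟩ => by
    rw [mem_sphere_zero_iff_norm] at hz
    exact ne_zero_and_add_sub_one_ne_zero (hz ▸ half_pos hd) (hz ▸ hnear _ hv)
  have hint := fun v hv => circleIntegrable_integrand (half_pos hd) (hnear v hv)
  have hcont : ContinuousOn (uncurry fun v z => -(A : ℂ) * secondDiff (integrand · B v z) A)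
      (closedBall u (d / 4) ×ˢ sphere 0 (d / 2)) := by
    have hc := fun a => continuousOn_integrand a B hsing
    simp only [secondDiff, two_smul]
    exact continuousOn_const.mul (((hc _).sub ((hc _).add (hc _))).add (hc _))
  have hI := hasDerivAt_circleIntegral_of_continuousOn (half_pos hd).le (by positivity)
    (fun v hv => hint v (ball_subset_closedBall hv) A B) hcont
    fun v hv z hz => hasDerivAt_integrand_left A B (hsing (v, z) ⟨ball_subset_closedBall hv, hz⟩).2
  rwa [circleIntegral.integral_const_mul,
    circleIntegral_secondDiff (fun a => hint u (mem_closedBall_self (by positivity)) a B)] at hI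

theorem hasDerivAt_f (A B : ℕ) {u : ℂ} (hu : u ≠ 1) :
    HasDerivAt (f A B) (-(A : ℂ) * secondDiff (f · B u) A) u := by
  have hd : 0 < ‖1 - u‖ := norm_pos_iff.2 (sub_ne_zero.2 hu.symm)
  -- `f A B v` integrates over a circle of radius `‖1 - v‖ / 2`, which moves with `v`;
  -- near `u` it may be replaced by the circle of radius `‖1 - u‖ / 2`.
  have hloc : (fun v => (2 * Real.pi * I)⁻¹ * ∮ z in C(0, ‖1 - u‖ / 2), integrand A B v z)
      =ᶠ[𝓝 u] f A B :=
    eventually_of_mem (closedBall_mem_nhds u (by positivity)) fun v hv =>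
      (f_eq_circleIntegral (half_pos hd) (half_norm_one_sub_lt_of_mem_closedBall hu hv) A B).symm
  refine (((hasDerivAt_circleIntegral_integrand A B hu).const_mul _).congr_of_eventuallyEq
    hloc.symm).congr_deriv ?_
  change _ = -(A : ℂ) *
    secondDiff (fun a => (2 * Real.pi * I)⁻¹ * ∮ z in C(0, ‖1 - u‖ / 2), integrand a B u z) A
  rw [secondDiff_const_mul]
  ring

theorem natCast_mul_secondDiff_f (A B : ℕ) {u : ℂ} (hu : u ≠ 1) :
    (A : ℂ) * secondDiff (f · B u) A = B * secondDiff (f A · u) B := by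
  have hd : 0 < ‖1 - u‖ := norm_pos_iff.2 (sub_ne_zero.2 hu.symm)
  have hf := fun a b => f_eq_circleIntegral (u := u) (half_pos hd) (half_lt_self hd) a b
  simp only [hf, secondDiff_const_mul, mul_left_comm _ (2 * Real.pi * I)⁻¹,
    natCast_mul_secondDiff_circleIntegral_integrand (half_pos hd) (half_lt_self hd)]

theorem stmt1_general (A B : ℕ) (u : ℂ) (hu : u ≠ 1) :
    DifferentiableAt ℂ (f A B) u ∧
    deriv (f A B) u = -(A : ℂ) * (f (A - 1) B u - 2 * f A B u + f (A + 1) B u) ∧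
    deriv (f A B) u = -(B : ℂ) * (f A (B - 1) u - 2 * f A B u + f A (B + 1) u) := by
  have hf := hasDerivAt_f A B hu
  refine ⟨hf.differentiableAt, ?_, ?_⟩
  · rw [hf.deriv, secondDiff, nsmul_eq_mul, Nat.cast_ofNat]
  · rw [hf.deriv, neg_mul, natCast_mul_secondDiff_f A B hu, secondDiff, nsmul_eq_mul,
      Nat.cast_ofNat, neg_mul]

/-- Derivative identity: `∂_u f_{A,B} = −A(f_{A−1,B} − 2f_{A,B} + f_{A+1,B})
= −B(f_{A,B−1} − 2f_{A,B} + f_{A,B+1})`. -/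
theorem stmt1 (A B : ℕ) (hA : 1 ≤ A) (hB : 1 ≤ B) (u : ℂ) (hu : u ≠ 1) :
    DifferentiableAt ℂ (f A B) u ∧
    deriv (f A B) u = -(A : ℂ) * (f (A - 1) B u - 2 * f A B u + f (A + 1) B u) ∧
    deriv (f A B) u = -(B : ℂ) * (f A (B - 1) u - 2 * f A B u + f A (B + 1) u) :=
  stmt1_general A B u hu
end

section
/- For all integers A ≥ 1, B ≥ 1 and every complex u with u ≠ 1 and u ≠ −1, there holds the quadratic relation f_{A,B}(u) + ((u+1)/(u−1))·f_{A−1,B−1}(u) − (u/(u−1))·[ f_{A−1,B}(u) + f_{A,B−1}(u) ] = 0. -/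
open Complex Metric

noncomputable def fIntegrand (A B : ℕ) (u z : ℂ) : ℂ :=
  (1 + (u + z - 1)⁻¹) ^ A * (1 - z⁻¹) ^ B

theorem fIntegrand_quadratic_relation (A B : ℕ) {u z : ℂ} (hu : u ≠ 1) (hz : z ≠ 0)
    (huz : u + z - 1 ≠ 0) :
    fIntegrand (A + 1) (B + 1) u z + (u + 1) / (u - 1) * fIntegrand A B u z
      - u / (u - 1) * (fIntegrand A (B + 1) u z + fIntegrand (A + 1) B u z) = 0 := by
  have hu' : u - 1 ≠ 0 := sub_ne_zero.mpr hu
  have key : (1 + (u + z - 1)⁻¹) * (1 - z⁻¹) + (u + 1) / (u - 1)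
      - u / (u - 1) * ((1 - z⁻¹) + (1 + (u + z - 1)⁻¹)) = 0 := by
    field_simp
    ring
  unfold fIntegrand
  linear_combination (1 + (u + z - 1)⁻¹) ^ A * (1 - z⁻¹) ^ B * key

theorem ne_zero_and_add_sub_one_ne_zero_of_mem_sphere {u z : ℂ} {r : ℝ} (hr : 0 < r)
    (hru : r ≠ ‖1 - u‖) (hz : z ∈ sphere (0 : ℂ) r) : z ≠ 0 ∧ u + z - 1 ≠ 0 := by
  rw [mem_sphere_zero_iff_norm] at hz
  refine ⟨fun h => hr.ne' (by simpa [h] using hz.symm), fun h => hru ?_⟩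
  rw [← hz, show z = 1 - u by linear_combination h]

theorem circleIntegrable_fIntegrand (A B : ℕ) {u : ℂ} {r : ℝ} (hr : 0 < r)
    (hru : r ≠ ‖1 - u‖) : CircleIntegrable (fIntegrand A B u) 0 r := by
  have hsing : ∀ z ∈ sphere (0 : ℂ) r, z ≠ 0 ∧ u + z - 1 ≠ 0 := fun _ hz =>
    ne_zero_and_add_sub_one_ne_zero_of_mem_sphere hr hru hz
  refine ContinuousOn.circleIntegrable hr.le ?_
  unfold fIntegrand
  exact ((continuousOn_const.add ((by fun_prop : Continuous fun z : ℂ => u + z - 1)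
    |>.continuousOn.inv₀ fun z hz => (hsing z hz).2)).pow A).mul
    ((continuousOn_const.sub (continuousOn_id.inv₀ fun z hz => (hsing z hz).1)).pow B)

theorem circleIntegral_fIntegrand_quadratic_relation (A B : ℕ) {u : ℂ} (hu : u ≠ 1) {r : ℝ}
    (hr : 0 < r) (hru : r ≠ ‖1 - u‖) :
    (∮ z in C(0, r), fIntegrand (A + 1) (B + 1) u z)
      + (u + 1) / (u - 1) * (∮ z in C(0, r), fIntegrand A B u z)
      - u / (u - 1) * ((∮ z in C(0, r), fIntegrand A (B + 1) u z)
        + ∮ z in C(0, r), fIntegrand (A + 1) B u z) = 0 := by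
  have hint (A B : ℕ) := circleIntegrable_fIntegrand A B hr hru
  have hzero : (∮ z in C(0, r), fIntegrand (A + 1) (B + 1) u z
      + (u + 1) / (u - 1) * fIntegrand A B u z
      - u / (u - 1) * (fIntegrand A (B + 1) u z + fIntegrand (A + 1) B u z)) = 0 := by
    rw [circleIntegral.integral_congr hr.le (g := fun _ => 0)]
    · simp [circleIntegral]
    · intro z hz
      obtain ⟨hz0, huz⟩ := ne_zero_and_add_sub_one_ne_zero_of_mem_sphere hr hru hz
      exact fIntegrand_quadratic_relation A B hu hz0 huz
  rwa [circleIntegral.integral_sub (by fun_prop) (by fun_prop),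
    circleIntegral.integral_add (by fun_prop) (by fun_prop),
    circleIntegral.integral_const_mul, circleIntegral.integral_const_mul,
    circleIntegral.integral_add (hint _ _) (hint _ _)] at hzero

theorem stmt3_general (A B : ℕ) (hA : 1 ≤ A) (hB : 1 ≤ B) (u : ℂ) (hu1 : u ≠ 1) :
    f A B u + ((u + 1) / (u - 1)) * f (A - 1) (B - 1) u
      - (u / (u - 1)) * (f (A - 1) B u + f A (B - 1) u) = 0 := by
  obtain ⟨a, rfl⟩ : ∃ a, A = a + 1 := ⟨A - 1, by omega⟩
  obtain ⟨b, rfl⟩ : ∃ b, B = b + 1 := ⟨B - 1, by omega⟩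
  have hnorm : 0 < ‖1 - u‖ := norm_pos_iff.mpr (sub_ne_zero.mpr hu1.symm)
  have h := circleIntegral_fIntegrand_quadratic_relation a b hu1 (half_pos hnorm)
    (half_lt_self hnorm).ne
  unfold fIntegrand at h
  simp only [f, Nat.add_sub_cancel]
  linear_combination (2 * Real.pi * I)⁻¹ * h

/-- Quadratic relation (\ref{fAB-quad}). -/
theorem stmt3 (A B : ℕ) (hA : 1 ≤ A) (hB : 1 ≤ B) (u : ℂ) (hu1 : u ≠ 1)
    (hum1 : u ≠ -1) :
    f A B u + ((u + 1) / (u - 1)) * f (A - 1) (B - 1) u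
      - (u / (u - 1)) * (f (A - 1) B u + f A (B - 1) u) = 0 :=
  stmt3_general A B hA hB u hu1
end

section
/- For every nonnegative integer N, every complex u ≠ 1, and every radius r with 0 < r < |1−u|, the contour integral (1/(2πi)) ∮_{|z|=r} (1 + 1/(u+z−1))^N (1 − 1/z)^N (2z + u − 1) dz over the circle of radius r centered at 0 traversed counterclockwise equals −u·N. -/
/-!
Put `a = 1 - u` and `Q z = z (z - a)`, so that `Q' z = 2z - a = 2z + u - 1` and the integrand is
`(1 - u / Q)^N Q'`. Expanding binomially, the `k`-th term is a multiple of `Q^(-k) Q'`, which for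
`k ≠ 1` is the derivative of `Q^(1-k) / (1-k)` on the circle and integrates to zero. The term
`k = 1` is `-N u Q'/Q = -N u (1/z + 1/(z - a))`, and only the pole at `0` lies inside the circle.
-/

open Complex Metric Set Finset

theorem one_add_inv_mul_one_sub_inv {K : Type*} [Field K] {u z : K} (hz : z ≠ 0)
    (hz' : z - (1 - u) ≠ 0) :
    (1 + (u + z - 1)⁻¹) * (1 - z⁻¹) = 1 - u * (z * (z - (1 - u)))⁻¹ := by
  rw [show u + z - 1 = z - (1 - u) by ring]
  field_simp
  ring

theorem one_sub_mul_inv_pow_mul_eq_sum {K : Type*} [Field K] (u q p : K) (N : ℕ) :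
    (1 - u * q⁻¹) ^ N * p =
      ∑ k ∈ range (N + 1), (N.choose k : K) * (-u) ^ k * (q ^ (-(k : ℤ)) * p) := by
  rw [sub_eq_neg_add, add_pow, sum_mul]
  refine sum_congr rfl fun k _ => ?_
  rw [zpow_neg, zpow_natCast, ← inv_pow, one_pow, mul_one, ← neg_mul, mul_pow]
  ring

namespace circleIntegral

variable {c : ℂ} {R : ℝ}

theorem integral_zpow_mul_deriv_eq_zero {Q Q' : ℂ → ℂ} {n : ℤ} (hR : 0 ≤ R)
    (hn : n ≠ -1) (hQ : ∀ z ∈ sphere c R, HasDerivAt Q (Q' z) z)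
    (hQ0 : ∀ z ∈ sphere c R, Q z ≠ 0) :
    ∮ z in C(c, R), Q z ^ n * Q' z = 0 := by
  have hn' : (n + 1 : ℂ) ≠ 0 := by exact_mod_cast (show n + 1 ≠ 0 by omega)
  refine integral_eq_zero_of_hasDerivWithinAt (f := fun z => Q z ^ (n + 1) / (n + 1)) hR
    fun z hz => HasDerivAt.hasDerivWithinAt ?_
  have := ((hasDerivAt_zpow (n + 1) (Q z) (.inl (hQ0 z hz))).comp z (hQ z hz)).div_const (n + 1)
  refine this.congr_deriv ?_
  rw [add_sub_cancel_right]
  push_cast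
  field_simp

theorem integral_sub_inv_of_notMem_closedBall {w : ℂ} (hR : 0 ≤ R) (hw : w ∉ closedBall c R) :
    ∮ z in C(c, R), (z - w)⁻¹ = 0 := by
  refine DiffContOnCl.circleIntegral_eq_zero hR (DifferentiableOn.diffContOnCl_ball
    (U := {w}ᶜ) ?_ fun z hz hzw => hw (hzw ▸ hz))
  exact (differentiableOn_id.sub_const w).inv fun z hz => sub_ne_zero.2 hz

theorem integral_sub_mul_sub_inv_mul_add (hR : 0 < R) {a : ℂ} (ha : a ∉ closedBall c R) :
    ∮ z in C(c, R), ((z - c) * (z - a)) ^ (-1 : ℤ) * ((z - c) + (z - a)) = 2 * Real.pi * I := by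
  have hsplit : EqOn (fun z => ((z - c) * (z - a)) ^ (-1 : ℤ) * ((z - c) + (z - a)))
      (fun z => (z - c)⁻¹ + (z - a)⁻¹) (sphere c R) := by
    intro z hz
    have hzc : z - c ≠ 0 := sub_ne_zero.2 (ne_of_mem_sphere hz hR.ne')
    have hza : z - a ≠ 0 := sub_ne_zero.2 fun h => ha (h ▸ sphere_subset_closedBall hz)
    simp only [zpow_neg_one]
    field_simp
    ring
  have hinteg : ∀ w : ℂ, w ∉ sphere c |R| → CircleIntegrable (fun z => (z - w)⁻¹) c R :=
    fun w hw => circleIntegrable_sub_inv_iff.2 (.inr hw)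
  rw [integral_congr hR.le hsplit, integral_add (hinteg c ?_) (hinteg a ?_),
    integral_sub_center_inv c hR.ne', integral_sub_inv_of_notMem_closedBall hR.le ha, add_zero]
  · simp [abs_of_pos hR, hR.ne]
  · exact fun h => ha (sphere_subset_closedBall (abs_of_pos hR ▸ h))

end circleIntegral

open circleIntegral in
theorem stmt6_general (N : ℕ) (u : ℂ) (r : ℝ) (hr : 0 < r)
    (hr' : r < ‖1 - u‖) :
    (2 * Real.pi * Complex.I)⁻¹ *
      (∮ z in C(0, r),
        (1 + (u + z - 1)⁻¹) ^ N * (1 - z⁻¹) ^ N * (2 * z + u - 1)) =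
    -u * (N : ℂ) := by
  set a := 1 - u
  have ha : a ∉ closedBall (0 : ℂ) r := by simpa using hr'
  have hne : ∀ z ∈ sphere (0 : ℂ) r, z ≠ 0 ∧ z - a ≠ 0 := fun z hz =>
    ⟨ne_of_mem_sphere hz hr.ne', sub_ne_zero.2 fun h => ha (h ▸ sphere_subset_closedBall hz)⟩
  have hQ0 : ∀ z ∈ sphere (0 : ℂ) r, z * (z - a) ≠ 0 := fun z hz =>
    mul_ne_zero (hne z hz).1 (hne z hz).2
  set term : ℕ → ℂ → ℂ := fun k z =>
    (N.choose k : ℂ) * (-u) ^ k * ((z * (z - a)) ^ (-(k : ℤ)) * (z + (z - a)))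
  have hexpand : EqOn (fun z => (1 + (u + z - 1)⁻¹) ^ N * (1 - z⁻¹) ^ N * (2 * z + u - 1))
      (fun z => ∑ k ∈ range (N + 1), term k z) (sphere 0 r) := fun z hz => by
    dsimp only
    rw [← mul_pow, one_add_inv_mul_one_sub_inv (hne z hz).1 (hne z hz).2,
      show 2 * z + u - 1 = z + (z - a) by ring]
    exact one_sub_mul_inv_pow_mul_eq_sum _ _ _ N
  have hint : ∀ k ∈ range (N + 1), CircleIntegrable (term k) 0 r := fun k _ =>
    ContinuousOn.circleIntegrable hr.le <| continuousOn_const.mul <|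
      ((continuousOn_id.mul (continuousOn_id.sub continuousOn_const)).zpow₀ _
        fun z hz => .inl (hQ0 z hz)).mul
      (continuousOn_id.add (continuousOn_id.sub continuousOn_const))
  have hzero : ∀ k ≠ 1, ∮ z in C(0, r), term k z = 0 := fun k hk => by
    rw [integral_const_mul, integral_zpow_mul_deriv_eq_zero hr.le (by omega) _ hQ0, mul_zero]
    exact fun z _ => ((hasDerivAt_id' z).mul ((hasDerivAt_id' z).sub_const a)).congr_deriv (by ring)
  have hone : ∮ z in C(0, r), term 1 z = N * (-u) * (2 * Real.pi * I) := by
    rw [integral_const_mul, ← integral_sub_mul_sub_inv_mul_add hr ha]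
    simp
  have hone_of_notMem : 1 ∉ range (N + 1) → ∮ z in C(0, r), term 1 z = 0 := fun h => by
    simp [hone, show N = 0 by simpa using h]
  rw [integral_congr hr.le hexpand, integral_fun_sum hint,
    sum_eq_single 1 (fun k _ hk => hzero k hk) hone_of_notMem, hone]
  field_simp

/-- The identity (\ref{id}):
`(1/(2πi)) ∮_{|z|=r} (1 + 1/(u+z−1))^N (1 − 1/z)^N (2z + u − 1) dz = −uN`
for any radius `0 < r < |1−u|`. -/
theorem stmt6 (N : ℕ) (u : ℂ) (hu : u ≠ 1) (r : ℝ) (hr : 0 < r)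
    (hr' : r < ‖1 - u‖) :
    (2 * Real.pi * Complex.I)⁻¹ *
      (∮ z in C(0, r),
        (1 + (u + z - 1)⁻¹) ^ N * (1 - z⁻¹) ^ N * (2 * z + u - 1)) =
    -u * (N : ℂ) :=
  stmt6_general N u r hr hr'
end

section
/- For every integer N ≥ 1 and every complex u ≠ 1, one has N·[ f_{N,N}(u) − f_{N,N−1}(u) ] = ((1−u)/2)·f'_{N,N}(u) + f_{N,N}(u)/2 − N/2, where f'_{N,N}(u) denotes the derivative of u ↦ f_{N,N}(u) at u. -/
/-!
Expanding both factors binomially reduces `f A B u` to the integrals `∮ (z - a)⁻ʲ z⁻ᵏ dz` with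
`a = 1 - u` outside the circle, which the partial fraction `1 / ((z - a) z) = a⁻¹ (1 / (z - a) - 1 / z)`
evaluates; hence `f A B u = fPoly A B t` with `t = (1 - u)⁻¹`. In this variable `((1 - u) / 2) ∂_u`
becomes `(t / 2) ∂_t`, which multiplies `t ^ (j + k + 1)` by `(j + k + 1) / 2`, while
`N (f_{N,N} - f_{N,N-1})` multiplies the coefficient of index `(j, k)` by `k + 1`, because
`N C(N-1, k) = (k + 1) C(N, k + 1)`. The coefficients of `fPoly N N` are symmetric in `j, k`, so the
weight `k + 1` may be replaced by `(j + k + 2) / 2`, and the two sides agree.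
-/

open Complex Metric Finset

def fCoeff (A B j k : ℕ) : ℂ :=
  A.choose (j + 1) * B.choose (k + 1) * (j + k).choose k * (-1) ^ (j + k)

def fPoly (A B : ℕ) (t : ℂ) : ℂ :=
  -B + ∑ j ∈ range A, ∑ k ∈ range B, fCoeff A B j k * t ^ (j + k + 1)

lemma one_add_inv_pow_mul_one_sub_inv_pow (A B : ℕ) (w z : ℂ) :
    (1 + w⁻¹) ^ A * (1 - z⁻¹) ^ B =
      ∑ j ∈ range (A + 1), ∑ k ∈ range (B + 1),
        A.choose j * (-1) ^ k * B.choose k * ((w ^ j)⁻¹ * (z ^ k)⁻¹) := by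
  rw [add_comm, sub_eq_neg_add, add_pow, add_pow, sum_mul_sum]
  refine sum_congr rfl fun j _ ↦ sum_congr rfl fun k _ ↦ ?_
  rw [neg_pow, inv_pow, inv_pow]
  ring

noncomputable def poleIntegral (a : ℂ) (r : ℝ) (j k : ℕ) : ℂ :=
  ∮ z in C(0, r), ((z - a) ^ j)⁻¹ * (z ^ k)⁻¹

section PoleIntegral

variable {a z : ℂ} {r : ℝ}

lemma sub_ne_zero_of_mem_sphere_of_lt_norm (ha : r < ‖a‖) (hz : z ∈ sphere (0 : ℂ) r) :
    z - a ≠ 0 := by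
  intro h
  rw [mem_sphere_zero_iff_norm, sub_eq_zero.1 h] at hz
  exact ha.ne' hz

lemma circleIntegrable_poleTerm (hr : 0 < r) (ha : r < ‖a‖) (j k : ℕ) :
    CircleIntegrable (fun z ↦ ((z - a) ^ j)⁻¹ * (z ^ k)⁻¹) 0 r := by
  refine ContinuousOn.circleIntegrable hr.le fun z hz ↦ ContinuousAt.continuousWithinAt ?_
  have hz0 : z ≠ 0 := ne_of_mem_sphere hz hr.ne'
  have hza := sub_ne_zero_of_mem_sphere_of_lt_norm ha hz
  fun_prop (disch := simp [hz0, hza])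

lemma poleIntegral_zero_right (hr : 0 ≤ r) (ha : r < ‖a‖) (j : ℕ) :
    poleIntegral a r j 0 = 0 := by
  refine DiffContOnCl.circleIntegral_eq_zero hr (DifferentiableOn.diffContOnCl_ball
    (U := {z | z ≠ a}) ?_ fun z hz ↦ ?_)
  · intro z hz
    have hza : z - a ≠ 0 := sub_ne_zero.2 hz
    fun_prop (disch := simp [hza])
  · rintro rfl
    exact (mem_closedBall_zero_iff.1 hz).not_gt ha

lemma poleIntegral_zero_left (hr : 0 < r) (k : ℕ) :
    poleIntegral a r 0 k = if k = 1 then 2 * Real.pi * I else 0 := by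
  have h := circleIntegral.integral_sub_zpow_of_ne (n := -k) (c := 0) (w := 0) (R := r)
  split_ifs with hk
  · subst hk
    simpa [poleIntegral] using
      circleIntegral.integral_sub_inv_of_mem_ball (c := 0) (w := 0) (R := r) (by simpa using hr)
  · simpa [poleIntegral] using h (by omega)

lemma poleIntegral_succ_succ (hr : 0 < r) (ha : r < ‖a‖) (j k : ℕ) :
    poleIntegral a r (j + 1) (k + 1) =
      a⁻¹ * (poleIntegral a r (j + 1) k - poleIntegral a r j (k + 1)) := by
  have ha0 : a ≠ 0 := norm_pos_iff.1 (hr.trans ha)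
  rw [poleIntegral, poleIntegral, poleIntegral,
    ← circleIntegral.integral_sub (circleIntegrable_poleTerm hr ha _ _)
      (circleIntegrable_poleTerm hr ha _ _), ← circleIntegral.integral_const_mul]
  refine circleIntegral.integral_congr hr.le fun z hz ↦ ?_
  have hz0 : z ≠ 0 := ne_of_mem_sphere hz hr.ne'
  have hza := sub_ne_zero_of_mem_sphere_of_lt_norm ha hz
  field_simp
  ring

lemma poleIntegral_succ_succ_eq (hr : 0 < r) (ha : r < ‖a‖) (j k : ℕ) :
    poleIntegral a r (j + 1) (k + 1) =
      2 * Real.pi * I * (-1) ^ (j + 1) * (j + k).choose k * a⁻¹ ^ (j + k + 1) := by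
  induction j generalizing k with
  | zero =>
    induction k with
    | zero =>
      rw [poleIntegral_succ_succ hr ha, poleIntegral_zero_right hr.le ha, poleIntegral_zero_left hr,
        if_pos rfl, Nat.choose_zero_right]
      push_cast
      ring
    | succ k ih =>
      rw [poleIntegral_succ_succ hr ha, ih, poleIntegral_zero_left hr, if_neg (by omega)]
      simp only [zero_add, Nat.choose_self]
      push_cast
      ring
  | succ j ihj =>
    induction k with
    | zero =>
      rw [poleIntegral_succ_succ hr ha, poleIntegral_zero_right hr.le ha, ihj,
        Nat.choose_zero_right, Nat.choose_zero_right]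
      push_cast
      ring
    | succ k ihk =>
      rw [poleIntegral_succ_succ hr ha, ihk, ihj, show j + 1 + (k + 1) = j + k + 1 + 1 by omega,
        show j + 1 + k = j + k + 1 by omega, show j + (k + 1) = j + k + 1 by omega,
        Nat.choose_succ_succ' (j + k + 1)]
      push_cast
      ring

lemma circleIntegral_eq_sum_poleIntegral (hr : 0 < r) (ha : r < ‖a‖) (A B : ℕ) :
    ∮ z in C(0, r), (1 + (z - a)⁻¹) ^ A * (1 - z⁻¹) ^ B =
      ∑ j ∈ range (A + 1), ∑ k ∈ range (B + 1),
        A.choose j * (-1) ^ k * B.choose k * poleIntegral a r j k := by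
  simp only [one_add_inv_pow_mul_one_sub_inv_pow]
  have hint (j k : ℕ) (c : ℂ) := (circleIntegrable_poleTerm hr ha j k).const_fun_smul (a := c)
  simp only [smul_eq_mul] at hint
  rw [circleIntegral.integral_fun_sum fun j _ ↦ CircleIntegrable.fun_sum _ fun k _ ↦ hint j k _]
  refine sum_congr rfl fun j _ ↦ ?_
  rw [circleIntegral.integral_fun_sum fun k _ ↦ hint j k _]
  simp only [circleIntegral.integral_const_mul, poleIntegral]

lemma sum_poleIntegral_eq_fPoly (hr : 0 < r) (ha : r < ‖a‖) (A B : ℕ) :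
    ∑ j ∈ range (A + 1), ∑ k ∈ range (B + 1),
        A.choose j * (-1) ^ k * B.choose k * poleIntegral a r j k =
      2 * Real.pi * I * fPoly A B a⁻¹ := by
  have hj0 : ∑ k ∈ range (B + 1), A.choose 0 * (-1) ^ k * B.choose k * poleIntegral a r 0 k =
      -B * (2 * Real.pi * I) := by
    rcases B with _ | B <;> simp [poleIntegral_zero_left hr]
  have hj (j : ℕ) : ∑ k ∈ range (B + 1),
        A.choose (j + 1) * (-1) ^ k * B.choose k * poleIntegral a r (j + 1) k =
      2 * Real.pi * I * ∑ k ∈ range B, fCoeff A B j k * a⁻¹ ^ (j + k + 1) := by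
    rw [sum_range_succ', poleIntegral_zero_right hr.le ha, mul_sum]
    simp only [mul_zero, add_zero, poleIntegral_succ_succ_eq hr ha, fCoeff]
    refine sum_congr rfl fun k _ ↦ ?_
    ring
  rw [sum_range_succ', hj0, sum_congr rfl fun j _ ↦ hj j, ← mul_sum, fPoly]
  ring

end PoleIntegral

lemma f_eq_fPoly (A B : ℕ) {u : ℂ} (hu : u ≠ 1) : f A B u = fPoly A B (1 - u)⁻¹ := by
  have ha : 0 < ‖1 - u‖ := norm_pos_iff.2 (sub_ne_zero.2 hu.symm)
  have hr : 0 < ‖1 - u‖ / 2 := by positivity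
  have hra : ‖1 - u‖ / 2 < ‖1 - u‖ := by linarith
  have hz (z : ℂ) : u + z - 1 = z - (1 - u) := by ring
  simp_rw [f, hz]
  rw [circleIntegral_eq_sum_poleIntegral hr hra, sum_poleIntegral_eq_fPoly hr hra,
    inv_mul_cancel_left₀ (by simp [Real.pi_ne_zero, I_ne_zero])]

lemma hasDerivAt_fPoly (A B : ℕ) (t : ℂ) :
    HasDerivAt (fPoly A B)
      (∑ j ∈ range A, ∑ k ∈ range B, fCoeff A B j k * ((j + k + 1 : ℕ) * t ^ (j + k))) t := by
  refine (hasDerivAt_const t _).add (HasDerivAt.fun_sum fun j _ ↦ HasDerivAt.fun_sum fun k _ ↦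
    (hasDerivAt_pow (j + k + 1) t).const_mul _) |>.congr_deriv ?_
  simp

lemma deriv_f (A B : ℕ) {u : ℂ} (hu : u ≠ 1) :
    deriv (f A B) u = deriv (fPoly A B) (1 - u)⁻¹ * ((1 - u)⁻¹) ^ 2 := by
  have hu' : 1 - u ≠ 0 := sub_ne_zero.2 hu.symm
  have hf : f A B =ᶠ[nhds u] fPoly A B ∘ fun v ↦ (1 - v)⁻¹ :=
    Filter.eventuallyEq_of_mem (isOpen_ne.mem_nhds hu) fun v hv ↦ f_eq_fPoly A B hv
  have hinv : HasDerivAt (fun v : ℂ ↦ (1 - v)⁻¹) (((1 - u)⁻¹) ^ 2) u := by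
    refine (((hasDerivAt_id' u).const_sub 1).fun_inv hu').congr_deriv ?_
    field_simp
  rw [hf.deriv_eq, ((hasDerivAt_fPoly A B _).comp u hinv).deriv, (hasDerivAt_fPoly A B _).deriv]

lemma fCoeff_comm (A j k : ℕ) : fCoeff A A j k = fCoeff A A k j := by
  rw [fCoeff, fCoeff, add_comm k j, Nat.choose_symm_add]
  ring

lemma succ_mul_fCoeff_sub (A B j k : ℕ) :
    (B + 1) * (fCoeff A (B + 1) j k - fCoeff A B j k) = (k + 1) * fCoeff A (B + 1) j k := by
  have h : ((B + 1) * B.choose k : ℂ) = (B + 1).choose (k + 1) * (k + 1) := by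
    exact_mod_cast Nat.add_one_mul_choose_eq B k
  have h' : ((B + 1).choose (k + 1) : ℂ) = B.choose k + B.choose (k + 1) := by
    exact_mod_cast Nat.choose_succ_succ' B k
  simp only [fCoeff]
  linear_combination (A.choose (j + 1) * (j + k).choose k * (-1) ^ (j + k) : ℂ) * (h + (B + 1) * h')

lemma succ_mul_fPoly_sub (A B : ℕ) (t : ℂ) :
    (B + 1) * (fPoly A (B + 1) t - fPoly A B t) =
      -(B + 1) + ∑ j ∈ range A, ∑ k ∈ range (B + 1),
        (k + 1) * (fCoeff A (B + 1) j k * t ^ (j + k + 1)) := by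
  have hB (j : ℕ) : fCoeff A B j B = 0 := by simp [fCoeff]
  have hext (j : ℕ) : ∑ k ∈ range B, fCoeff A B j k * t ^ (j + k + 1) =
      ∑ k ∈ range (B + 1), fCoeff A B j k * t ^ (j + k + 1) := by
    simp [sum_range_succ, hB]
  have hterms : ∑ j ∈ range A, ∑ k ∈ range (B + 1),
        (k + 1) * (fCoeff A (B + 1) j k * t ^ (j + k + 1)) =
      (B + 1) * (∑ j ∈ range A, ∑ k ∈ range (B + 1), fCoeff A (B + 1) j k * t ^ (j + k + 1) -
        ∑ j ∈ range A, ∑ k ∈ range (B + 1), fCoeff A B j k * t ^ (j + k + 1)) := by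
    simp only [← sum_sub_distrib, mul_sum]
    refine sum_congr rfl fun j _ ↦ sum_congr rfl fun k _ ↦ ?_
    linear_combination t ^ (j + k + 1) * (succ_mul_fCoeff_sub A B j k).symm
  rw [fPoly, fPoly, sum_congr rfl fun j _ ↦ hext j, hterms]
  push_cast
  ring

lemma sum_range_sum_range_mul_left_comm {F : ℕ → ℕ → ℂ} (hF : ∀ j k, F j k = F k j)
    (w : ℕ → ℂ) (n : ℕ) :
    ∑ j ∈ range n, ∑ k ∈ range n, w k * F j k = ∑ j ∈ range n, ∑ k ∈ range n, w j * F j k := by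
  rw [sum_comm]
  simp only [hF]

lemma succ_mul_fPoly_sub_eq_deriv (N : ℕ) (t : ℂ) :
    (N + 1) * (fPoly (N + 1) (N + 1) t - fPoly (N + 1) N t) =
      t / 2 * deriv (fPoly (N + 1) (N + 1)) t + fPoly (N + 1) (N + 1) t / 2 - (N + 1) / 2 := by
  have hsym := sum_range_sum_range_mul_left_comm
    (F := fun j k ↦ fCoeff (N + 1) (N + 1) j k * t ^ (j + k + 1))
    (fun j k ↦ by rw [fCoeff_comm, add_comm j k]) (fun k ↦ (k : ℂ) + 1) (N + 1)
  beta_reduce at hsym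
  have heuler : t * ∑ j ∈ range (N + 1), ∑ k ∈ range (N + 1),
        fCoeff (N + 1) (N + 1) j k * ((j + k + 1 : ℕ) * t ^ (j + k)) =
      ∑ j ∈ range (N + 1), ∑ k ∈ range (N + 1),
          ((k + 1) * (fCoeff (N + 1) (N + 1) j k * t ^ (j + k + 1)) +
            (j + 1) * (fCoeff (N + 1) (N + 1) j k * t ^ (j + k + 1)) -
            fCoeff (N + 1) (N + 1) j k * t ^ (j + k + 1)) := by
    simp only [mul_sum]
    refine sum_congr rfl fun j _ ↦ sum_congr rfl fun k _ ↦ ?_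
    push_cast
    ring
  simp only [sum_add_distrib, sum_sub_distrib] at heuler
  rw [succ_mul_fPoly_sub, (hasDerivAt_fPoly _ _ t).deriv, fPoly]
  push_cast at heuler ⊢
  linear_combination (hsym - heuler) / 2

/-- Relation (\ref{feat-2}):
`N[f_{N,N} − f_{N,N−1}] = ((1−u)/2) ∂_u f_{N,N} + f_{N,N}/2 − N/2`. -/
theorem stmt8 (N : ℕ) (hN : 1 ≤ N) (u : ℂ) (hu : u ≠ 1) :
    (N : ℂ) * (f N N u - f N (N - 1) u) =
      ((1 - u) / 2) * deriv (f N N) u + f N N u / 2 - (N : ℂ) / 2 := by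
  obtain ⟨M, rfl⟩ := Nat.exists_eq_add_of_le' hN
  have ht : (1 - u) * (1 - u)⁻¹ = 1 := mul_inv_cancel₀ (sub_ne_zero.2 hu.symm)
  rw [Nat.add_sub_cancel, deriv_f _ _ hu, f_eq_fPoly _ _ hu, f_eq_fPoly _ _ hu]
  push_cast
  rw [succ_mul_fPoly_sub_eq_deriv]
  linear_combination
    (-(1 - u)⁻¹ * deriv (fPoly (M + 1) (M + 1)) (1 - u)⁻¹ / 2) * ht
end

section
/- Let N ≥ 0 and k ≥ 0 be integers and let u be a complex number with u ∉ {0, 1}. Then (1/u)·(1/(2πi)) ∮_{|z|=r} ((1−z)^{N+k}/(z+u−1)^{N+k})·((z+u)^N/z^N) dz = (−1)^{N+k−1}·f_{N+k,N}(1/u), where the contour on the left is the circle of radius r centered at 0 traversed counterclockwise with 0 < r < |1−u|. -/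
open Complex Metric Set

section CircleIntegral

variable {E : Type*} [NormedAddCommGroup E] [NormedSpace ℂ E]

theorem circleIntegral_comp_mul_left (g : ℂ → E) (a c : ℂ) (r : ℝ) :
    (∮ z in C(a * c, ‖a‖ * r), g z) = a • ∮ z in C(c, r), g (a * z) := by
  set F : ℝ → E := fun θ =>
    deriv (circleMap (a * c) (‖a‖ * r)) θ • g (circleMap (a * c) (‖a‖ * r) θ)
  have hrot : ∀ (c : ℂ) (θ : ℝ),
      circleMap (a * c) (‖a‖ * r) (θ + a.arg) = a * circleMap c r θ := by
    intro c θ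
    simp only [circleMap]
    push_cast
    rw [add_mul, exp_add, mul_add]
    congr 1
    conv_rhs => rw [← norm_mul_exp_arg_mul_I a]
    ring
  have hper : Function.Periodic F (2 * Real.pi) := fun θ => by
    simp [F, deriv_circleMap, periodic_circleMap _ _ θ]
  have hshift : ∀ θ : ℝ,
      F (θ + a.arg) = a • (deriv (circleMap c r) θ • g (a * circleMap c r θ)) := by
    intro θ
    have hrot₀ := hrot 0 θ
    rw [mul_zero] at hrot₀
    simp only [F, deriv_circleMap, hrot, hrot₀, smul_smul]
    ring_nf
  calc (∮ z in C(a * c, ‖a‖ * r), g z) = ∫ θ in (0 : ℝ)..2 * Real.pi, F θ := rfl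
    _ = ∫ θ in (0 : ℝ)..2 * Real.pi, F (θ + a.arg) := by
      rw [intervalIntegral.integral_comp_add_right, zero_add, add_comm _ a.arg,
        hper.intervalIntegral_add_eq a.arg 0, zero_add]
    _ = a • ∮ z in C(c, r), g (a * z) := by
      simp only [hshift, intervalIntegral.integral_smul]
      rfl

theorem circleIntegral_eq_of_differentiableOn_ball_diff_center [CompleteSpace E] {g : ℂ → E}
    {c : ℂ} {R r₁ r₂ : ℝ} (hg : DifferentiableOn ℂ g (ball c R \ {c}))
    (hr₁ : 0 < r₁) (hr₁R : r₁ < R) (hr₂ : 0 < r₂) (hr₂R : r₂ < R) :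
    (∮ z in C(c, r₁), g z) = ∮ z in C(c, r₂), g z := by
  wlog hle : r₁ ≤ r₂ generalizing r₁ r₂
  · exact (this hr₂ hr₂R hr₁ hr₁R (le_of_not_ge hle)).symm
  have hannulus : closedBall c r₂ \ ball c r₁ ⊆ ball c R \ {c} := by
    rintro z ⟨hz₂, hz₁⟩
    refine ⟨closedBall_subset_ball hr₂R hz₂, fun hzc => hz₁ ?_⟩
    rw [mem_singleton_iff.mp hzc]
    exact mem_ball_self hr₁
  refine (circleIntegral_eq_of_differentiable_on_annulus_off_countable hr₁ hle countable_empty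
    (hg.continuousOn.mono hannulus) fun z hz => hg.differentiableAt ?_).symm
  refine (isOpen_ball.sdiff isClosed_singleton).mem_nhds (hannulus ?_)
  exact ⟨ball_subset_closedBall hz.1.1, fun h => hz.1.2 (ball_subset_closedBall h)⟩

end CircleIntegral

theorem differentiableOn_integrand (A B : ℕ) (u : ℂ) :
    DifferentiableOn ℂ (fun z : ℂ => (1 - z) ^ A / (z + u - 1) ^ A * ((z + u) ^ B / z ^ B))
      (ball 0 ‖1 - u‖ \ {0}) := by
  rintro z ⟨hz, hz0⟩
  have hzu : z + u - 1 ≠ 0 := by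
    rintro h
    rw [mem_ball_zero_iff, show z = 1 - u by linear_combination h] at hz
    exact lt_irrefl _ hz
  refine (DifferentiableAt.mul ?_ ?_).differentiableWithinAt
  · exact (by fun_prop : DifferentiableAt ℂ _ z).div (by fun_prop) (pow_ne_zero _ hzu)
  · exact (by fun_prop : DifferentiableAt ℂ _ z).div (by fun_prop) (pow_ne_zero _ hz0)

theorem integrand_one_div_eq (A B : ℕ) {u z : ℂ} (hu : u ≠ 0) (hz : z ≠ 0)
    (hd : 1 / u + z - 1 ≠ 0) :
    (1 + (1 / u + z - 1)⁻¹) ^ A * (1 - z⁻¹) ^ B =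
      (-1) ^ A * ((1 - -u * z) ^ A / (-u * z + u - 1) ^ A * ((-u * z + u) ^ B / (-u * z) ^ B)) := by
  have hd' : 1 - u + u * z ≠ 0 := fun h => hd (by field_simp; linear_combination h)
  have hfirst : 1 + (1 / u + z - 1)⁻¹ = -((1 - -u * z) / (-u * z + u - 1)) := by
    rw [show 1 / u + z - 1 = (1 - u + u * z) / u by field_simp; ring,
      show -u * z + u - 1 = -(1 - u + u * z) by ring]
    field_simp
    ring
  have hsecond : 1 - z⁻¹ = (-u * z + u) / (-u * z) := by
    field_simp
    ring
  rw [hfirst, hsecond, neg_pow, div_pow, div_pow]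
  ring

theorem f_one_div_eq (A B : ℕ) {u : ℂ} (hu0 : u ≠ 0) (hu1 : u ≠ 1) {r : ℝ} (hr : 0 < r)
    (hr' : r < ‖1 - u‖) :
    f A B (1 / u) = (-1) ^ (A + 1) * (1 / u) * ((2 * Real.pi * I)⁻¹ *
      ∮ z in C(0, r), (1 - z) ^ A / (z + u - 1) ^ A * ((z + u) ^ B / z ^ B)) := by
  have hnorm : 0 < ‖1 - u‖ := norm_pos_iff.mpr (sub_ne_zero.mpr (Ne.symm hu1))
  set ρ : ℝ := ‖1 - 1 / u‖ / 2 with hρ_def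
  have hρ : 0 < ρ := by
    have : (1 : ℂ) - 1 / u ≠ 0 := by
      rw [sub_ne_zero, ne_comm, one_div, inv_ne_one]
      exact hu1
    simp only [ρ]
    positivity
  have hradius : ‖-u‖ * ρ = ‖1 - u‖ / 2 := by
    rw [show (1 : ℂ) - u = -u * (1 - 1 / u) by field_simp; ring, norm_mul]
    ring
  have hintegrand : ∀ z ∈ sphere (0 : ℂ) ρ, (1 + (1 / u + z - 1)⁻¹) ^ A * (1 - z⁻¹) ^ B =
      (-1) ^ A * ((1 - -u * z) ^ A / (-u * z + u - 1) ^ A * ((-u * z + u) ^ B / (-u * z) ^ B)) := by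
    intro z hz
    rw [mem_sphere_zero_iff_norm] at hz
    refine integrand_one_div_eq A B hu0 (norm_pos_iff.mp (hz ▸ hρ)) fun h => ?_
    rw [show z = 1 - 1 / u by linear_combination h] at hz
    linarith [hρ_def]
  have hsubst := circleIntegral_comp_mul_left
    (fun z : ℂ => (1 - z) ^ A / (z + u - 1) ^ A * ((z + u) ^ B / z ^ B)) (-u) 0 ρ
  rw [mul_zero, hradius, smul_eq_mul, circleIntegral_eq_of_differentiableOn_ball_diff_center
    (differentiableOn_integrand A B u) (by positivity) (by linarith) hr hr'] at hsubst
  rw [f, circleIntegral.integral_congr hρ.le hintegrand, circleIntegral.integral_const_mul, hsubst]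
  field_simp
  ring

/-- The transformation (\ref{T-1}):
`(1/u)(1/(2πi)) ∮ ((1−z)^{N+k}/(z+u−1)^{N+k})((z+u)^N/z^N) dz
  = (−1)^{N+k−1} f_{N+k,N}(1/u)`. -/
theorem stmt12 (N k : ℕ) (u : ℂ) (hu0 : u ≠ 0) (hu1 : u ≠ 1)
    (r : ℝ) (hr : 0 < r) (hr' : r < ‖1 - u‖) :
    (1 / u) * ((2 * Real.pi * Complex.I)⁻¹ *
      (∮ z in C(0, r),
        ((1 - z) ^ (N + k) / (z + u - 1) ^ (N + k)) *
          ((z + u) ^ N / z ^ N))) =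
    (-1 : ℂ) ^ ((N : ℤ) + (k : ℤ) - 1) * f (N + k) N (1 / u) := by
  have hsign : (-1 : ℂ) ^ ((N : ℤ) + (k : ℤ) - 1) * (-1) ^ (N + k + 1) = 1 := by
    rw [← zpow_natCast, ← zpow_add₀ (by norm_num)]
    exact Even.neg_one_zpow ⟨N + k, by push_cast; ring⟩
  rw [f_one_div_eq (N + k) N hu0 hu1 hr hr']
  simp only [← mul_assoc, hsign, one_mul]
end

section
/- For every integer k and every real λ ≠ 0, the function v_k is differentiable at λ and satisfies both (e^λ + e^{−λ} + 2)·v_k'(λ)/(e^λ − e^{−λ}) = ((2k+1)/2)·(v_{k−1}(λ) − v_k(λ)) and v_k'(λ)/(e^λ − e^{−λ}) = ((2k+1)/8)·(v_{k−1}(λ) − 2·v_k(λ) + v_{k+1}(λ)). -/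
/-!
Everything is expressed through `t = (e^λ - 1)/(e^λ + 1) = tanh (λ/2)`: one has `t' = (1 - t²)/2`,
`e^λ + e^{-λ} + 2 = 4/(1 - t²)` and `e^λ - e^{-λ} = 4t/(1 - t²)`, while `v_k = t^{2k+1}`.
So `v_k'/(e^λ - e^{-λ}) = ((2k+1)/8) t^{2k-1} (1 - t²)²`, and both claims reduce to
identities of Laurent polynomials in `t`.
-/

/-- `v k λ = ((e^λ − 1)/(e^λ + 1))^{2k+1}`, an integer (possibly negative) power. -/
noncomputable def v (k : ℤ) (l : ℝ) : ℝ :=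
  ((Real.exp l - 1) / (Real.exp l + 1)) ^ (2 * k + 1)

open Real

noncomputable def expRatio (l : ℝ) : ℝ := (exp l - 1) / (exp l + 1)

lemma v_eq_expRatio_zpow (k : ℤ) (l : ℝ) : v k l = expRatio l ^ (2 * k + 1) := rfl

lemma expRatio_ne_zero {l : ℝ} (hl : l ≠ 0) : expRatio l ≠ 0 :=
  div_ne_zero (sub_ne_zero.mpr (mt (exp_eq_one_iff l).mp hl)) (by positivity)

lemma one_sub_expRatio_sq (l : ℝ) : 1 - expRatio l ^ 2 = 4 * exp l / (exp l + 1) ^ 2 := by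
  rw [expRatio]
  field_simp
  ring

lemma one_sub_expRatio_sq_pos (l : ℝ) : 0 < 1 - expRatio l ^ 2 := by
  rw [one_sub_expRatio_sq]
  positivity

lemma hasDerivAt_expRatio (l : ℝ) : HasDerivAt expRatio ((1 - expRatio l ^ 2) / 2) l := by
  have h := ((hasDerivAt_exp l).sub_const 1).div ((hasDerivAt_exp l).add_const 1)
    (by positivity : exp l + 1 ≠ 0)
  refine h.congr_deriv ?_
  rw [one_sub_expRatio_sq]
  field_simp
  ring

lemma exp_add_exp_neg_add_two (l : ℝ) : exp l + exp (-l) + 2 = 4 / (1 - expRatio l ^ 2) := by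
  rw [one_sub_expRatio_sq, exp_neg]
  field_simp
  ring

lemma exp_sub_exp_neg (l : ℝ) : exp l - exp (-l) = 4 * expRatio l / (1 - expRatio l ^ 2) := by
  rw [one_sub_expRatio_sq, exp_neg, expRatio]
  field_simp
  ring

lemma hasDerivAt_v (k : ℤ) {l : ℝ} (hl : l ≠ 0) :
    HasDerivAt (v k) ((2 * k + 1) * expRatio l ^ (2 * k) * ((1 - expRatio l ^ 2) / 2)) l := by
  refine ((hasDerivAt_zpow (2 * k + 1) _ (Or.inl (expRatio_ne_zero hl))).comp l
    (hasDerivAt_expRatio l)).congr_deriv ?_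
  push_cast
  rw [add_sub_cancel_right]

/-- The actions of `x∂_x` and `∂_x` (with `x = e^λ + e^{−λ} + 2`) on `v_k`:
`x∂_x v_k = ((2k+1)/2)(v_{k−1} − v_k)` and
`∂_x v_k = ((2k+1)/8)(v_{k−1} − 2v_k + v_{k+1})`. -/
theorem stmt17 (k : ℤ) (l : ℝ) (hl : l ≠ 0) :
    DifferentiableAt ℝ (v k) l ∧
    (Real.exp l + Real.exp (-l) + 2) * deriv (v k) l /
        (Real.exp l - Real.exp (-l)) =
      ((2 * (k : ℝ) + 1) / 2) * (v (k - 1) l - v k l) ∧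
    deriv (v k) l / (Real.exp l - Real.exp (-l)) =
      ((2 * (k : ℝ) + 1) / 8) * (v (k - 1) l - 2 * v k l + v (k + 1) l) := by
  have hv := hasDerivAt_v k hl
  have ht := expRatio_ne_zero hl
  have hs := (one_sub_expRatio_sq_pos l).ne'
  have hpow (m : ℕ) :
      expRatio l ^ (2 * k - 1 + m) = expRatio l ^ (2 * k - 1) * expRatio l ^ m := by
    rw [zpow_add₀ ht, zpow_natCast]
  have h0 : expRatio l ^ (2 * k) = expRatio l ^ (2 * k - 1) * expRatio l := by
    simpa using hpow 1
  have h1 : v k l = expRatio l ^ (2 * k - 1) * expRatio l ^ 2 := by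
    rw [v_eq_expRatio_zpow, ← hpow 2]; push_cast; ring_nf
  have h2 : v (k + 1) l = expRatio l ^ (2 * k - 1) * expRatio l ^ 4 := by
    rw [v_eq_expRatio_zpow, ← hpow 4]; push_cast; ring_nf
  have hm : v (k - 1) l = expRatio l ^ (2 * k - 1) := by
    rw [v_eq_expRatio_zpow]; ring_nf
  refine ⟨hv.differentiableAt, ?_, ?_⟩
  · rw [hv.deriv, exp_add_exp_neg_add_two, exp_sub_exp_neg, h0, h1, hm]
    field_simp
  · rw [hv.deriv, exp_sub_exp_neg, h0, h1, h2, hm]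
    field_simp
    ring
end

section
/- For every real λ ≠ 0, the genus-one one-loop mean of the Laguerre ensemble admits the expansion s_{1,1}(λ) + 2·s_{1,0}(λ) = (1/256)·( v_{−3}(λ) − 4·v_{−2}(λ) + 6·v_{−1}(λ) − 4·v_0(λ) + v_1(λ) ), where s_{k,β}(λ) := (e^λ + e^{−λ})^β/(e^λ − e^{−λ})^{2k+3}. -/
noncomputable def s (k β : ℕ) (l : ℝ) : ℝ :=
  (Real.exp l + Real.exp (-l)) ^ β / (Real.exp l - Real.exp (-l)) ^ (2 * k + 3)

/-!
With `t = e^λ` and `u = (t - 1)/(t + 1) = tanh (λ/2)` one has `v_k = u^{2k+1}`,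
`e^λ − e^{−λ} = 4u/(1 − u²)` and `e^λ + e^{−λ} = 2(1 + u²)/(1 − u²)`. Hence
`s_{1,1} + 2 s_{1,0} = (1 − u²)⁴/(256 u⁵)`, and expanding `(1 − u²)⁴` binomially gives the
five terms `u^{-5}, u^{-3}, u^{-1}, u, u³`.
-/

section Cayley

variable {K : Type*} [Field K] {t : K}

lemma one_sub_sq_cayley (ht1 : t + 1 ≠ 0) :
    1 - ((t - 1) / (t + 1)) ^ 2 = 4 * t / (t + 1) ^ 2 := by
  field_simp
  ring

lemma sub_inv_eq_cayley [CharZero K] (ht : t ≠ 0) (ht1 : t + 1 ≠ 0) :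
    t - t⁻¹ = 4 * ((t - 1) / (t + 1)) / (1 - ((t - 1) / (t + 1)) ^ 2) := by
  rw [one_sub_sq_cayley ht1]
  field_simp
  ring

lemma add_inv_eq_cayley [CharZero K] (ht : t ≠ 0) (ht1 : t + 1 ≠ 0) :
    t + t⁻¹ = 2 * (1 + ((t - 1) / (t + 1)) ^ 2) / (1 - ((t - 1) / (t + 1)) ^ 2) := by
  rw [one_sub_sq_cayley ht1]
  field_simp
  ring

end Cayley

lemma s_eq_cayley (k β : ℕ) (l : ℝ) :
    let u := (Real.exp l - 1) / (Real.exp l + 1)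
    s k β l = (2 * (1 + u ^ 2) / (1 - u ^ 2)) ^ β / (4 * u / (1 - u ^ 2)) ^ (2 * k + 3) := by
  have ht : Real.exp l ≠ 0 := (Real.exp_pos l).ne'
  have ht1 : Real.exp l + 1 ≠ 0 := by positivity
  rw [s, Real.exp_neg, sub_inv_eq_cayley ht ht1, add_inv_eq_cayley ht ht1]

lemma cayley_exp_ne_zero {l : ℝ} (hl : l ≠ 0) : (Real.exp l - 1) / (Real.exp l + 1) ≠ 0 := by
  have ht1 : Real.exp l + 1 ≠ 0 := by positivity
  rw [div_ne_zero_iff, sub_ne_zero, Ne, Real.exp_eq_one_iff]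
  exact ⟨hl, ht1⟩

lemma one_sub_sq_cayley_exp_ne_zero (l : ℝ) :
    1 - ((Real.exp l - 1) / (Real.exp l + 1)) ^ 2 ≠ 0 := by
  rw [one_sub_sq_cayley (by positivity)]
  positivity

lemma genus_one_mean_in_cayley {K : Type*} [Field K] [CharZero K] {u : K} (hu : u ≠ 0)
    (hu1 : 1 - u ^ 2 ≠ 0) :
    2 * (1 + u ^ 2) / (1 - u ^ 2) / (4 * u / (1 - u ^ 2)) ^ 5
        + 2 * (1 / (4 * u / (1 - u ^ 2)) ^ 5) =
      (1 / 256) * (u ^ (-5 : ℤ) - 4 * u ^ (-3 : ℤ) + 6 * u ^ (-1 : ℤ) - 4 * u ^ (1 : ℤ)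
        + u ^ (3 : ℤ)) := by
  calc _ = (1 - u ^ 2) ^ 4 / (256 * u ^ 5) := by
        field_simp
        ring
    _ = _ := by
        simp only [zpow_neg, zpow_ofNat]
        field_simp
        ring

/-- The genus-one one-loop mean `W_1^{(1)} = s_{1,1} + 2 s_{1,0}` of the Laguerre
ensemble in terms of the times `v_k`. -/
theorem stmt19 (l : ℝ) (hl : l ≠ 0) :
    s 1 1 l + 2 * s 1 0 l =
      (1 / 256) *
        (v (-3) l - 4 * v (-2) l + 6 * v (-1) l - 4 * v 0 l + v 1 l) := by
  rw [s_eq_cayley, s_eq_cayley, pow_one, pow_zero]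
  exact genus_one_mean_in_cayley (cayley_exp_ne_zero hl) (one_sub_sq_cayley_exp_ne_zero l)
end
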